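/- Let f ∈ H² and let I be an inner function such that f·K_I is a closed subspace of H². If f(0) ≠ 0, then f·K_I is a nearly S*-invariant subspace. If f(0) = 0, then f·K_I is both (i) of the form zⁿ·N for some n ≥ 1 and some nearly S*-invariant subspace N ⊆ H², and (ii) nearly S*-invariant with the one-dimensional defect space (f/z)·(K_I ⊖ (K_I ∩ zH²)). -/

import Mathlib

open MeasureTheory Complex Real
open scoped ENNReal ComplexConjugate

noncomputable section

namespace Paper

instance : Fact (0 < 2 * Real.pi) := ⟨by positivity⟩

abbrev Tc : Type := AddCircle (2 * Real.pi)
abbrev μ0 : MeasureTheory.Measure Tc := AddCircle.haarAddCircle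
abbrev L2 : Type := MeasureTheory.Lp ℂ 2 μ0

def coeffCLM (n : ℤ) : L2 →L[ℂ] ℂ :=
  LinearMap.mkContinuous
    { toFun := fun f => fourierBasis.repr f n
      map_add' := fun f g => by simp
      map_smul' := fun c f => by simp }
    1
    (fun f => by
      have h := lp.norm_apply_le_norm (p := 2) (by norm_num) (fourierBasis.repr f) n
      simpa using h)

def cf (f : L2) (n : ℤ) : ℂ := coeffCLM n f

/-- The subspace of `L²(𝕋)` of functions whose Fourier coefficients of index `< k` vanish.
Thus `coeffGE 0 = H²` and `coeffGE k = zᵏH²` for `k ≥ 0`. -/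
def coeffGE (k : ℤ) : Submodule ℂ L2 :=
  ⨅ (n : ℤ) (_ : n < k), LinearMap.ker (coeffCLM n : L2 →ₗ[ℂ] ℂ)

/-- The subspace of `L²(𝕋)` of functions whose Fourier coefficients of index `≥ k` vanish.
Thus `coeffLT 0 = conj (H²₀) = (H²)^⊥`. -/
def coeffLT (k : ℤ) : Submodule ℂ L2 :=
  ⨅ (n : ℤ) (_ : k ≤ n), LinearMap.ker (coeffCLM n : L2 →ₗ[ℂ] ℂ)

/-- The Hardy space `H²` of the unit disc, viewed as a subspace of `L²(𝕋)`. -/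
def H2 : Submodule ℂ L2 := coeffGE 0

lemma mem_coeffGE {k : ℤ} {f : L2} : f ∈ coeffGE k ↔ ∀ n < k, cf f n = 0 := by
  simp [coeffGE, cf, Submodule.mem_iInf, LinearMap.mem_ker]

lemma isClosed_coeffGE (k : ℤ) : IsClosed ((coeffGE k : Submodule ℂ L2) : Set L2) := by
  have h : ((coeffGE k : Submodule ℂ L2) : Set L2)
      = ⋂ (n : ℤ) (_ : n < k), (LinearMap.ker (coeffCLM n : L2 →ₗ[ℂ] ℂ) : Set L2) := by
    ext f
    simp [coeffGE, Submodule.mem_iInf, Set.mem_iInter]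
  rw [h]
  exact isClosed_iInter fun n => isClosed_iInter fun _ => ContinuousLinearMap.isClosed_ker (coeffCLM n)

end Paper
namespace Paper

open scoped Classical in
/-- Multiplication by an `L^∞` function, as a linear map on `L²(𝕋)` (defined to be `0` if the
symbol is not essentially bounded). -/
def mulLM (g : Tc → ℂ) : L2 →ₗ[ℂ] L2 :=
  if hg : MemLp g ⊤ μ0 then
    { toFun := fun f => ((Lp.memLp f).smul (r := 2) hg).toLp (g • ⇑f)
      map_add' := fun f₁ f₂ => by
        apply Lp.ext
        filter_upwards [MemLp.coeFn_toLp ((Lp.memLp (f₁ + f₂)).smul (r := 2) hg),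
          MemLp.coeFn_toLp ((Lp.memLp f₁).smul (r := 2) hg),
          MemLp.coeFn_toLp ((Lp.memLp f₂).smul (r := 2) hg),
          Lp.coeFn_add f₁ f₂,
          Lp.coeFn_add (((Lp.memLp f₁).smul (r := 2) hg).toLp (g • ⇑f₁))
            (((Lp.memLp f₂).smul (r := 2) hg).toLp (g • ⇑f₂))] with x h0 h1 h2 h3 h4
        rw [h0, h4, Pi.add_apply, h1, h2]
        simp only [Pi.smul_apply', Pi.add_apply, h3, smul_add]
      map_smul' := fun c f => by
        apply Lp.ext
        filter_upwards [MemLp.coeFn_toLp ((Lp.memLp (c • f)).smul (r := 2) hg),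
          MemLp.coeFn_toLp ((Lp.memLp f).smul (r := 2) hg),
          Lp.coeFn_smul c f,
          Lp.coeFn_smul c (((Lp.memLp f).smul (r := 2) hg).toLp (g • ⇑f))] with x h0 h1 h3 h4
        simp only [RingHom.id_apply]
        rw [h0, h4, Pi.smul_apply, h1]
        simp only [Pi.smul_apply', Pi.smul_apply, h3]
        exact smul_comm _ _ _ }
  else 0

end Paper
namespace Paper

/-- The orthogonal projection of `L²(𝕋)` onto a closed subspace, as a map `L² → L²`. -/
def projCLM (U : Submodule ℂ L2) (hU : IsClosed (U : Set L2)) : L2 →L[ℂ] L2 :=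
  letI : CompleteSpace U := hU.completeSpace_coe
  U.subtypeL.comp U.orthogonalProjectionOnto

/-- The subspace `θH²` of `L²(𝕋)`. -/
def thetaH2 (θ : Tc → ℂ) : Submodule ℂ L2 := H2.map (mulLM θ)

/-- The model space `K_θ = H² ⊖ θH²`. -/
def Kmod (θ : Tc → ℂ) : Submodule ℂ L2 := H2 ⊓ (thetaH2 θ)ᗮ

lemma isClosed_Kmod (θ : Tc → ℂ) : IsClosed ((Kmod θ : Submodule ℂ L2) : Set L2) :=
  (isClosed_coeffGE 0).inter (thetaH2 θ).isClosed_orthogonal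

/-- The orthogonal projection `P_θ : L² → K_θ` (composed with the inclusion back into `L²`). -/
def Ptheta (θ : Tc → ℂ) : L2 →L[ℂ] L2 := projCLM (Kmod θ) (isClosed_Kmod θ)

/-- The orthogonal projection `P₊ : L² → H²`. -/
def Pplus : L2 →L[ℂ] L2 := projCLM H2 (isClosed_coeffGE 0)

/-- The independent variable `z = e^{it}`, as a function on the circle. -/
def zf : Tc → ℂ := fun x => fourier 1 x

/-- The conjugate variable `z̄ = e^{-it}`. -/
def zbar : Tc → ℂ := fun x => fourier (-1) x

lemma memLp_fourier (n : ℤ) : MemLp (fun x : Tc => (fourier n x : ℂ)) ⊤ μ0 := by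
  refine memLp_top_of_bound ((fourier n).continuous.aestronglyMeasurable) 1 ?_
  exact Filter.Eventually.of_forall fun x => le_of_eq (Circle.norm_coe _)

lemma memLp_zf : MemLp zf ⊤ μ0 := memLp_fourier 1

lemma memLp_zbar : MemLp zbar ⊤ μ0 := memLp_fourier (-1)

/-- The backward shift `S* : f ↦ (f - f(0))/z`, realised on `L²(𝕋)` as
`f ↦ P₊(z̄ f)`; on `H²` this is the usual backward shift. -/
def Sstar : L2 →ₗ[ℂ] L2 := (Pplus : L2 →ₗ[ℂ] L2).comp (mulLM zbar)

/-- `θ` is an inner function: it is essentially bounded, unimodular a.e. on the circle, and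
all its negative Fourier coefficients vanish (i.e. it is the boundary function of a bounded
analytic function on the disc). -/
structure IsInner (θ : Tc → ℂ) : Prop where
  memLinf : MemLp θ ⊤ μ0
  unimodular : ∀ᵐ x ∂μ0, ‖θ x‖ = 1
  analytic : ∀ n : ℤ, n < 0 → fourierCoeff θ n = 0

/-- Pointwise complex conjugation of a function on the circle. -/
def conjFun (f : Tc → ℂ) : Tc → ℂ := fun x => (starRingEnd ℂ) (f x)

lemma memLp_conj {f : Tc → ℂ} {p : ℝ≥0∞} (hf : MemLp f p μ0) : MemLp (conjFun f) p μ0 := by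
  refine ⟨continuous_star.comp_aestronglyMeasurable hf.1, ?_⟩
  have h : eLpNorm (conjFun f) p μ0 = eLpNorm f p μ0 :=
    eLpNorm_congr_norm_ae (Filter.Eventually.of_forall fun x => by
      simp [conjFun])
  rw [h]
  exact hf.2

/-- Complex conjugation on `L²(𝕋)`. -/
def conjL2 (f : L2) : L2 := (memLp_conj (Lp.memLp f)).toLp (conjFun ⇑f)

end Paper
namespace Paper

/-- The set `w·U = {h ∈ L² : h = w·k (a.e.) for some k ∈ U}`, for a fixed function `w` on the
circle and a subspace `U ⊆ L²`; this is a (not necessarily closed) subspace of `L²`. -/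
def mulSet (w : Tc → ℂ) (U : Submodule ℂ L2) : Submodule ℂ L2 where
  carrier := {h : L2 | ∃ k ∈ U, (⇑h : Tc → ℂ) =ᵐ[μ0] fun x => w x * (⇑k : Tc → ℂ) x}
  add_mem' := by
    rintro a b ⟨k₁, hk₁, ha⟩ ⟨k₂, hk₂, hb⟩
    refine ⟨k₁ + k₂, U.add_mem hk₁ hk₂, ?_⟩
    filter_upwards [ha, hb, Lp.coeFn_add a b, Lp.coeFn_add k₁ k₂] with x h1 h2 h3 h4
    simp only [h3, Pi.add_apply, h1, h2, h4, mul_add]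
  zero_mem' := by
    refine ⟨0, U.zero_mem, ?_⟩
    filter_upwards [Lp.coeFn_zero ℂ 2 μ0] with x h1
    simp [h1]
  smul_mem' := by
    rintro c a ⟨k, hk, ha⟩
    refine ⟨c • k, U.smul_mem c hk, ?_⟩
    filter_upwards [ha, Lp.coeFn_smul c a, Lp.coeFn_smul c k] with x h1 h2 h3
    simp only [h2, Pi.smul_apply, h1, h3, smul_eq_mul]
    ring

/-- `f` is an outer function: `f ∈ H²` and the polynomial multiples of `f` are dense in `H²`
(i.e. `f` is cyclic for the forward shift). -/
def IsOuter (f : L2) : Prop :=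
  f ∈ H2 ∧
    (Submodule.span ℂ (Set.range fun k : ℕ => ((mulLM zf) ^ k) f)).topologicalClosure = H2

/-- `h` is a cyclic vector for the backward shift `S*` on `H²`. -/
def CyclicSstar (h : L2) : Prop :=
  (Submodule.span ℂ (Set.range fun k : ℕ => (Sstar ^ k) h)).topologicalClosure = H2

/-- `d` divides `u` in the sense of inner functions. -/
def InnerDvd (d u : Tc → ℂ) : Prop :=
  ∃ v : Tc → ℂ, IsInner v ∧ ∀ᵐ x ∂μ0, u x = d x * v x

/-- Two inner functions have greatest common inner divisor `1`, i.e. every common inner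
divisor is a (necessarily unimodular) constant. -/
def CoprimeInner (u₁ u₂ : Tc → ℂ) : Prop :=
  ∀ d : Tc → ℂ, IsInner d → InnerDvd d u₁ → InnerDvd d u₂ → ∃ c : ℂ, ∀ᵐ x ∂μ0, d x = c

/-- The kernel of the truncated Toeplitz operator `A_g^θ = P_θ (g ·) : K_θ → K_θ`:
`f ∈ ker A_g^θ` iff `f ∈ K_θ` and `g f ⊥ K_θ`. -/
def kerA (θ g : Tc → ℂ) : Submodule ℂ L2 :=
  Kmod θ ⊓ ((Kmod θ)ᗮ).comap (mulLM g)

/-- The kernel of the dual truncated Toeplitz operator `D_g^θ = Q (g ·) : K_θ^⊥ → K_θ^⊥`: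
`f ∈ ker D_g^θ` iff `f ∈ K_θ^⊥` and `g f ⊥ K_θ^⊥`. -/
def kerD (θ g : Tc → ℂ) : Submodule ℂ L2 :=
  (Kmod θ)ᗮ ⊓ (((Kmod θ)ᗮ)ᗮ).comap (mulLM g)

/-- The space `A = {f ∈ ker D_g^θ : gf ∈ K_θ ∩ zH²}`. -/
def dualA (θ g : Tc → ℂ) : Submodule ℂ L2 :=
  kerD θ g ⊓ (Kmod θ ⊓ coeffGE 1).comap (mulLM g)

/-- The space `C = ker D_g^θ ∩ (conj H²₀ ⊕ θzH²) ∩ A`. -/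
def dualC (θ g : Tc → ℂ) : Submodule ℂ L2 :=
  kerD θ g ⊓ (coeffLT 0 ⊔ (coeffGE 1).map (mulLM θ)) ⊓ dualA θ g

end Paper
namespace Paper

/-- The vector-valued space `L²(𝕋, ℂⁿ)`, realised as an `ℓ²`-direct sum of `n` copies of
`L²(𝕋)`; the subspace `H2v n` below is the vector-valued Hardy space `H²(𝔻, ℂⁿ)`. -/
abbrev Vec (n : ℕ) : Type := PiLp 2 (fun _ : Fin n => L2)

/-- The `i`-th component, as a linear map `L²(𝕋, ℂⁿ) → L²(𝕋)`. -/
def compLM {n : ℕ} (i : Fin n) : Vec n →ₗ[ℂ] L2 where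
  toFun F := F i
  map_add' F G := rfl
  map_smul' c F := rfl

/-- Vector-valued analogue of `coeffGE`: `coeffGEv n 0 = H²(𝔻, ℂⁿ)` and
`coeffGEv n 1 = zH²(𝔻, ℂⁿ)`. -/
def coeffGEv (n : ℕ) (k : ℤ) : Submodule ℂ (Vec n) :=
  ⨅ i : Fin n, (coeffGE k).comap (compLM i)

/-- The vector-valued Hardy space `H²(𝔻, ℂⁿ)`. -/
def H2v (n : ℕ) : Submodule ℂ (Vec n) := coeffGEv n 0

/-- The vector-valued model space `K_θ(𝔻, ℂⁿ)` (all components in `K_θ`). -/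
def Kv (θ : Tc → ℂ) (n : ℕ) : Submodule ℂ (Vec n) :=
  ⨅ i : Fin n, (Kmod θ).comap (compLM i)

/-- Evaluation at the origin, `F ↦ F(0)`, for (Hardy-space) elements of `L²(𝕋, ℂⁿ)`. -/
def ev0 {n : ℕ} (F : Vec n) : EuclideanSpace ℂ (Fin n) := WithLp.toLp 2 (fun i => cf (F i) 0)

/-- Evaluation at the origin as a linear map `H²(𝔻, ℂⁿ) → ℂⁿ`. -/
def ev0LM (n : ℕ) : Vec n →ₗ[ℂ] EuclideanSpace ℂ (Fin n) where
  toFun := ev0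
  map_add' _F _G := by
    ext i
    simp [ev0, cf]
  map_smul' _c _F := by
    ext i
    simp [ev0, cf]

/-- The componentwise backward shift on `L²(𝕋, ℂⁿ)`. -/
def SstarV {n : ℕ} : Vec n →ₗ[ℂ] Vec n where
  toFun F := WithLp.toLp 2 (fun i => Sstar (F i))
  map_add' _F _G := by
    ext i
    simp
  map_smul' _c _F := by
    ext i
    simp

/-- Componentwise multiplication by a scalar `L^∞` function on `L²(𝕋, ℂⁿ)`. -/
def mulVLM (g : Tc → ℂ) {n : ℕ} : Vec n →ₗ[ℂ] Vec n where
  toFun F := WithLp.toLp 2 (fun i => mulLM g (F i))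
  map_add' _F _G := by
    ext i
    simp
  map_smul' _c _F := by
    ext i
    simp

/-- The projection onto the first `i` coordinates, `P_i : H²(𝔻, ℂⁿ) → H²(𝔻, ℂⁱ)`. -/
def projLE {n i : ℕ} (h : i ≤ n) : Vec n →ₗ[ℂ] Vec i where
  toFun F := WithLp.toLp 2 (fun j => F (Fin.castLE h j))
  map_add' F G := rfl
  map_smul' c F := rfl

/-- The `i`-th row of a matrix symbol applied to a vector function:
`F ↦ ∑ j, G i j • F j`. -/
def rowLM {n : ℕ} (G : Matrix (Fin n) (Fin n) (Tc → ℂ)) (i : Fin n) : Vec n →ₗ[ℂ] L2 :=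
  ∑ j : Fin n, (mulLM (G i j)).comp (compLM j)

/-- The kernel of the block Toeplitz operator `T_G = P₊(G ·)` on `H²(𝔻, ℂⁿ)`:
`F ∈ ker T_G` iff `F ∈ H²(𝔻, ℂⁿ)` and every component of `GF` is orthogonal to `H²`. -/
def kerT {n : ℕ} (G : Matrix (Fin n) (Fin n) (Tc → ℂ)) : Submodule ℂ (Vec n) :=
  H2v n ⊓ ⨅ i : Fin n, (H2ᗮ).comap (rowLM G i)

/-- The kernel of the matrix truncated Toeplitz operator `A_G^θ = P_θ(G ·)` on `K_θ(𝔻, ℂ²)`. -/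
def kerAv (θ : Tc → ℂ) (G : Matrix (Fin 2) (Fin 2) (Tc → ℂ)) : Submodule ℂ (Vec 2) :=
  Kv θ 2 ⊓ ⨅ i : Fin 2, ((Kmod θ)ᗮ).comap (rowLM G i)

/-- The scalar-type space `w·U ⊆ L²(𝕋, ℂⁿ)`, for a fixed vector function `w` and a
subspace `U ⊆ L²(𝕋)` of scalar functions. -/
def vecMulSet {n : ℕ} (w : Vec n) (U : Submodule ℂ L2) : Submodule ℂ (Vec n) where
  carrier := {F | ∃ k ∈ U, ∀ i : Fin n,
    (⇑(F i) : Tc → ℂ) =ᵐ[μ0] fun x => (⇑(w i) : Tc → ℂ) x * (⇑k : Tc → ℂ) x}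
  add_mem' := by
    rintro a b ⟨k₁, hk₁, ha⟩ ⟨k₂, hk₂, hb⟩
    refine ⟨k₁ + k₂, U.add_mem hk₁ hk₂, fun i => ?_⟩
    have hab : (a + b) i = a i + b i := rfl
    rw [hab]
    filter_upwards [ha i, hb i, Lp.coeFn_add (a i) (b i), Lp.coeFn_add k₁ k₂]
      with x h1 h2 h3 h4
    simp only [h3, Pi.add_apply, h1, h2, h4, mul_add]
  zero_mem' := by
    refine ⟨0, U.zero_mem, fun i => ?_⟩
    have h0 : (0 : Vec n) i = 0 := rfl
    rw [h0]
    filter_upwards [Lp.coeFn_zero ℂ 2 μ0] with x h1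
    simp [h1]
  smul_mem' := by
    rintro c a ⟨k, hk, ha⟩
    refine ⟨c • k, U.smul_mem c hk, fun i => ?_⟩
    have hc : (c • a) i = c • (a i) := rfl
    rw [hc]
    filter_upwards [ha i, Lp.coeFn_smul c (a i), Lp.coeFn_smul c k] with x h1 h2 h3
    simp only [h2, Pi.smul_apply, h1, h3, smul_eq_mul]
    ring

end Paper
namespace Paper

/-- The representation `F = F₀ k₀ + z ∑ⱼ kⱼ eⱼ` of Theorem 3.4(1): here the columns of `F₀`
are `W 0, …, W (r-1)`, the `eⱼ` are an orthonormal basis of the defect space, and the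
parameter `k = (k₀, k₁, …, k_m)` runs through a subspace of `H²(𝔻, ℂ^{r+m})`. -/
def rep1 {n r m : ℕ} (W : Fin r → Vec n) (e : Fin m → Vec n) (k : Vec (r + m)) (F : Vec n) :
    Prop :=
  ∀ i : Fin n,
    (⇑(F i) : Tc → ℂ) =ᵐ[μ0] fun x =>
      (∑ j : Fin r, (⇑(k (Fin.castAdd m j)) : Tc → ℂ) x * (⇑(W j i) : Tc → ℂ) x) +
        zf x * ∑ j : Fin m, (⇑(k (Fin.natAdd r j)) : Tc → ℂ) x * (⇑(e j i) : Tc → ℂ) x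

/-- The representation `F = z ∑ⱼ kⱼ eⱼ` of Theorem 3.4(2). -/
def rep2 {n m : ℕ} (e : Fin m → Vec n) (k : Vec m) (F : Vec n) : Prop :=
  ∀ i : Fin n,
    (⇑(F i) : Tc → ℂ) =ᵐ[μ0] fun x =>
      zf x * ∑ j : Fin m, (⇑(k j) : Tc → ℂ) x * (⇑(e j i) : Tc → ℂ) x

end Paper
namespace Paper

/-!
If `f(0) ≠ 0` and `h = f k` vanishes at the origin, then so does `k`; as `K_I` is
`S*`-invariant, `S*h = z̄h = f · z̄k` stays in `f K_I`. If `f` vanishes to order `n ≥ 1` at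
the origin, then `f K_I = zⁿ · (z̄ⁿf) K_I` with `(z̄ⁿf)(0) ≠ 0`, which gives (i).
For (ii), write `k = (k - s k₀) + s k₀`, where `k₀ = 1 - conj (I 0) • I` is the reproducing
kernel of `K_I` at the origin and `s` is chosen so that the first summand vanishes there:
then `S*h = f · z̄(k - s k₀) + s z̄ (f k₀)`, and `k₀ ∈ K_I ⊖ (K_I ∩ zH²)`. The defect space is
at most one-dimensional because an element of `K_I ⊖ (K_I ∩ zH²)` is determined by its value
at the origin.
-/

lemma cf_eq_fourierCoeff (f : L2) (n : ℤ) : cf f n = fourierCoeff (⇑f) n :=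
  fourierBasis_repr f n

lemma cf_congr_ae {f : L2} {g : Tc → ℂ} (h : (⇑f : Tc → ℂ) =ᵐ[μ0] g) (n : ℤ) :
    cf f n = fourierCoeff g n := by
  rw [cf_eq_fourierCoeff, fourierCoeff_congr_ae h]

lemma cf_eq_inner (f : L2) (n : ℤ) : cf f n = inner ℂ (fourierLp 2 n) f := by
  rw [← coe_fourierBasis, ← fourierBasis.repr_apply_apply]
  rfl

lemma eq_zero_of_cf_eq_zero {f : L2} (h : ∀ n, cf f n = 0) : f = 0 := by
  refine fourierBasis.repr.injective ?_
  ext n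
  rw [map_zero]
  exact h n

lemma inner_L2 (a b : L2) : inner ℂ a b = ∫ x, conj (a x) * b x ∂μ0 := by
  rw [L2.inner_def]
  simp [mul_comm]

lemma coeFn_mulLM {g : Tc → ℂ} (hg : MemLp g ⊤ μ0) (u : L2) :
    (⇑(mulLM g u) : Tc → ℂ) =ᵐ[μ0] fun x => g x * u x := by
  rw [mulLM, dif_pos hg]
  exact MemLp.coeFn_toLp ((Lp.memLp u).smul (r := 2) hg)

lemma mulLM_comm (g h : Tc → ℂ) (u : L2) : mulLM g (mulLM h u) = mulLM h (mulLM g u) := by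
  by_cases hg : MemLp g ⊤ μ0
  · by_cases hh : MemLp h ⊤ μ0
    · refine Lp.ext ?_
      filter_upwards [coeFn_mulLM hg (mulLM h u), coeFn_mulLM hh u,
        coeFn_mulLM hh (mulLM g u), coeFn_mulLM hg u] with x h₁ h₂ h₃ h₄
      rw [h₁, h₂, h₃, h₄, mul_left_comm]
    · simp [mulLM, dif_neg hh]
  · simp [mulLM, dif_neg hg]

lemma inner_mulLM_mulLM {g : Tc → ℂ} (hg : MemLp g ⊤ μ0) (hg₁ : ∀ᵐ x ∂μ0, ‖g x‖ = 1)
    (u v : L2) : inner ℂ (mulLM g u) (mulLM g v) = inner ℂ u v := by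
  rw [inner_L2, inner_L2]
  refine integral_congr_ae ?_
  filter_upwards [coeFn_mulLM hg u, coeFn_mulLM hg v, hg₁] with x hu hv hx
  have : conj (g x) * g x = 1 := by
    rw [← Complex.normSq_eq_conj_mul_self, Complex.normSq_eq_norm_sq, hx]; norm_num
  rw [hu, hv, map_mul]
  linear_combination conj (u x) * v x * this

lemma norm_mulLM {g : Tc → ℂ} (hg : MemLp g ⊤ μ0) (hg₁ : ∀ᵐ x ∂μ0, ‖g x‖ = 1) (u : L2) :
    ‖mulLM g u‖ = ‖u‖ := by
  have h := inner_mulLM_mulLM hg hg₁ u u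
  rw [inner_self_eq_norm_sq_to_K, inner_self_eq_norm_sq_to_K] at h
  exact (pow_left_inj₀ (norm_nonneg _) (norm_nonneg _) two_ne_zero).mp (by exact_mod_cast h)

lemma continuous_mulLM {g : Tc → ℂ} (hg : MemLp g ⊤ μ0) (hg₁ : ∀ᵐ x ∂μ0, ‖g x‖ = 1) :
    Continuous (mulLM g) :=
  AddMonoidHomClass.continuous_of_bound (mulLM g) 1 fun u => by
    rw [norm_mulLM hg hg₁, one_mul]

lemma norm_fourier_eq_one (n : ℤ) : ∀ᵐ x ∂μ0, ‖fourier n x‖ = 1 :=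
  Filter.Eventually.of_forall fun _ => Circle.norm_coe _

lemma mulLM_fourier_mulLM_fourier (m n : ℤ) (u : L2) :
    mulLM (fourier m ·) (mulLM (fourier n ·) u) = mulLM (fourier (m + n) ·) u := by
  refine Lp.ext ?_
  filter_upwards [coeFn_mulLM (memLp_fourier m) (mulLM (fourier n ·) u),
    coeFn_mulLM (memLp_fourier n) u, coeFn_mulLM (memLp_fourier (m + n)) u] with x h₁ h₂ h₃
  rw [h₁, h₂, h₃, fourier_add, mul_assoc]

lemma mulLM_fourier_zero (u : L2) : mulLM (fourier 0 ·) u = u := by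
  refine Lp.ext ?_
  filter_upwards [coeFn_mulLM (memLp_fourier 0) u] with x hx
  rw [hx, fourier_zero, one_mul]

lemma mulLM_zf_pow (n : ℕ) : mulLM zf ^ n = mulLM (fourier n ·) := by
  induction n with
  | zero => exact LinearMap.ext fun u => (mulLM_fourier_zero u).symm
  | succ n ih =>
    refine LinearMap.ext fun u => ?_
    rw [pow_succ', Module.End.mul_apply, ih]
    exact (mulLM_fourier_mulLM_fourier 1 n u).trans (by push_cast; rw [add_comm])

lemma inner_mulLM_zbar (u v : L2) : inner ℂ u (mulLM zbar v) = inner ℂ (mulLM zf u) v := by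
  change inner ℂ u (mulLM (fourier (-1) ·) v) = inner ℂ (mulLM (fourier 1 ·) u) v
  rw [← inner_mulLM_mulLM (memLp_fourier 1) (norm_fourier_eq_one 1) u,
    mulLM_fourier_mulLM_fourier, add_neg_cancel, mulLM_fourier_zero]

lemma cf_mulLM_fourier (m : ℤ) (u : L2) (j : ℤ) :
    cf (mulLM (fourier m ·) u) j = cf u (j - m) := by
  rw [cf_congr_ae (coeFn_mulLM (memLp_fourier m) u), cf_eq_fourierCoeff, fourierCoeff,
    fourierCoeff]
  congr 1 with x
  rw [smul_eq_mul, smul_eq_mul, ← mul_assoc, ← fourier_add, neg_sub, sub_eq_neg_add]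

lemma cf_conjL2 (u : L2) (n : ℤ) : cf (conjL2 u) n = conj (cf u (-n)) := by
  rw [conjL2, cf_congr_ae (MemLp.coeFn_toLp _), cf_eq_fourierCoeff, fourierCoeff, fourierCoeff,
    ← integral_conj, neg_neg]
  congr 1 with x
  simp [conjFun]

lemma hasSum_cf_mul {u v w : L2} (hw : (⇑w : Tc → ℂ) =ᵐ[μ0] fun x => u x * v x) (j : ℤ) :
    HasSum (fun i => cf u (j - i) * cf v i) (cf w j) := by
  set x := mulLM (fourier j ·) (conjL2 u)
  have hx : inner ℂ x v = cf w j := by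
    rw [inner_L2, cf_congr_ae hw, fourierCoeff]
    refine integral_congr_ae ?_
    filter_upwards [coeFn_mulLM (memLp_fourier j) (conjL2 u),
      MemLp.coeFn_toLp (memLp_conj (Lp.memLp u))] with t h₁ h₂
    simp only [x, conjL2] at h₁ h₂ ⊢
    rw [h₁, h₂, conjFun, fourier_neg, smul_eq_mul, map_mul, conj_conj]
    ring
  have hterm : ∀ i, inner ℂ x (fourierBasis i) * inner ℂ (fourierBasis i) v =
      cf u (j - i) * cf v i := by
    intro i
    rw [← inner_conj_symm, coe_fourierBasis, ← cf_eq_inner, ← cf_eq_inner, cf_mulLM_fourier,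
      cf_conjL2, conj_conj, neg_sub]
  rw [← hx]
  exact (fourierBasis.hasSum_inner_mul_inner x v).congr_fun fun i => (hterm i).symm

lemma cf_mul_of_le {u v w : L2} {N j : ℤ} (hv : v ∈ H2) (hu : ∀ i < N, cf u i = 0)
    (hw : (⇑w : Tc → ℂ) =ᵐ[μ0] fun x => u x * v x) (hj : j ≤ N) :
    cf w j = cf u j * cf v 0 := by
  have h := (hasSum_cf_mul hw j).unique (hasSum_single 0 fun i hi => ?_)
  · rwa [sub_zero] at h
  rcases lt_or_gt_of_ne hi with hi | hi
  · rw [mem_coeffGE.mp hv i hi, mul_zero]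
  · rw [hu _ (by omega), zero_mul]

lemma mem_H2_of_mul {u v w : L2} (hu : u ∈ H2) (hv : v ∈ H2)
    (hw : (⇑w : Tc → ℂ) =ᵐ[μ0] fun x => u x * v x) : w ∈ H2 :=
  mem_coeffGE.mpr fun j hj => by
    rw [cf_mul_of_le hv (mem_coeffGE.mp hu) hw hj.le, mem_coeffGE.mp hu j hj, zero_mul]

lemma cf_sub (f g : L2) (n : ℤ) : cf (f - g) n = cf f n - cf g n := map_sub (coeffCLM n) f g

lemma cf_smul (c : ℂ) (f : L2) (n : ℤ) : cf (c • f) n = c * cf f n := map_smul (coeffCLM n) c f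

lemma mulLM_zf_mulLM_zbar (u : L2) : mulLM zf (mulLM zbar u) = u := by
  change mulLM (fourier 1 ·) (mulLM (fourier (-1) ·) u) = u
  rw [mulLM_fourier_mulLM_fourier, add_neg_cancel, mulLM_fourier_zero]

lemma mulLM_zbar_mulLM_zf (u : L2) : mulLM zbar (mulLM zf u) = u := by
  change mulLM (fourier (-1) ·) (mulLM (fourier 1 ·) u) = u
  rw [mulLM_fourier_mulLM_fourier, neg_add_cancel, mulLM_fourier_zero]

lemma fourierLp_zero_mem_H2 : fourierLp 2 0 ∈ H2 :=
  mem_coeffGE.mpr fun n hn => by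
    rw [cf_eq_inner, orthonormal_iff_ite.mp orthonormal_fourier, if_neg hn.ne]

lemma mulLM_zf_mem_H2 {g : L2} (hg : g ∈ H2) : mulLM zf g ∈ H2 :=
  mem_coeffGE.mpr fun n hn => by
    rw [show zf = (fourier 1 ·) from rfl, cf_mulLM_fourier]
    exact mem_coeffGE.mp hg _ (by omega)

lemma mulLM_zbar_mem_H2 {h : L2} (hH : h ∈ H2) (h0 : cf h 0 = 0) : mulLM zbar h ∈ H2 :=
  mem_coeffGE.mpr fun n hn => by
    rw [show zbar = (fourier (-1) ·) from rfl, cf_mulLM_fourier, sub_neg_eq_add]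
    rcases (show n + 1 ≤ 0 by omega).lt_or_eq with hlt | heq
    · exact mem_coeffGE.mp hH _ hlt
    · rw [heq, h0]

lemma Sstar_eq_mulLM_zbar {h : L2} (hH : h ∈ H2) (h0 : cf h 0 = 0) : Sstar h = mulLM zbar h := by
  have : CompleteSpace H2 := (isClosed_coeffGE 0).completeSpace_coe
  exact Submodule.starProjection_eq_self_iff.mpr (mulLM_zbar_mem_H2 hH h0)

lemma exists_order {f : L2} (hf : f ∈ H2) (hne : f ≠ 0) :
    ∃ n : ℕ, cf f n ≠ 0 ∧ ∀ j < (n : ℤ), cf f j = 0 := by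
  classical
  have hex : ∃ m : ℕ, cf f m ≠ 0 := by
    by_contra! h
    refine hne (eq_zero_of_cf_eq_zero fun j => ?_)
    rcases lt_or_ge j 0 with hj | hj
    · exact mem_coeffGE.mp hf j hj
    · obtain ⟨m, rfl⟩ := Int.eq_ofNat_of_zero_le hj
      exact h m
  refine ⟨Nat.find hex, Nat.find_spec hex, fun j hj => ?_⟩
  rcases lt_or_ge j 0 with hj' | hj'
  · exact mem_coeffGE.mp hf j hj'
  · obtain ⟨m, rfl⟩ := Int.eq_ofNat_of_zero_le hj'
    exact not_not.mp (Nat.find_min hex (by omega))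

lemma mulSet_le_H2 {f : L2} (hf : f ∈ H2) {K : Submodule ℂ L2} (hKH : K ≤ H2) :
    mulSet (⇑f) K ≤ H2 := by
  rintro h ⟨k, hk, hfk⟩
  exact mem_H2_of_mul hf (hKH hk) hfk

lemma mulSet_coeFn_zero (K : Submodule ℂ L2) : mulSet (⇑(0 : L2)) K = ⊥ := by
  refine eq_bot_iff.mpr ?_
  rintro h ⟨k, -, hk⟩
  refine (Submodule.mem_bot ℂ).mpr (Lp.ext ?_)
  filter_upwards [hk, Lp.coeFn_zero ℂ 2 μ0] with x h₁ h₂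
  rw [h₁, h₂, Pi.zero_apply, zero_mul]

lemma mulLM_zbar_mem_mulSet {f h k : L2} {K : Submodule ℂ L2} (hk : mulLM zbar k ∈ K)
    (hfk : (⇑h : Tc → ℂ) =ᵐ[μ0] fun x => f x * k x) : mulLM zbar h ∈ mulSet (⇑f) K := by
  refine ⟨mulLM zbar k, hk, ?_⟩
  filter_upwards [coeFn_mulLM memLp_zbar h, coeFn_mulLM memLp_zbar k, hfk] with x h₁ h₂ h₃
  rw [h₁, h₂, h₃, mul_left_comm]

def NearlySstarInvariant (M : Submodule ℂ L2) : Prop :=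
  ∀ h ∈ M, cf h 0 = 0 → Sstar h ∈ M

lemma nearlySstarInvariant_bot : NearlySstarInvariant ⊥ := by
  intro h hh _
  rw [(Submodule.mem_bot ℂ).mp hh, map_zero]
  exact Submodule.zero_mem _

lemma nearlySstarInvariant_Kmod (I : Tc → ℂ) : NearlySstarInvariant (Kmod I) := by
  intro k hk hk0
  obtain ⟨hkH, hkO⟩ := Submodule.mem_inf.mp hk
  rw [Sstar_eq_mulLM_zbar hkH hk0]
  refine Submodule.mem_inf.mpr ⟨mulLM_zbar_mem_H2 hkH hk0, (Submodule.mem_orthogonal _ _).mpr ?_⟩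
  rintro _ ⟨g, hg, rfl⟩
  rw [inner_mulLM_zbar, mulLM_comm]
  exact Submodule.inner_right_of_mem_orthogonal
    (Submodule.mem_map_of_mem (mulLM_zf_mem_H2 hg)) hkO

lemma nearlySstarInvariant_mulSet {K : Submodule ℂ L2} (hK : NearlySstarInvariant K)
    (hKH : K ≤ H2) {g : L2} (hg : g ∈ H2) (hg0 : cf g 0 ≠ 0) :
    NearlySstarInvariant (mulSet (⇑g) K) := by
  rintro h ⟨k, hk, hgk⟩ h0
  have hk0 : cf k 0 = 0 := by
    have hprod := cf_mul_of_le (hKH hk) (mem_coeffGE.mp hg) hgk le_rfl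
    rw [h0, eq_comm, mul_eq_zero] at hprod
    exact hprod.resolve_left hg0
  rw [Sstar_eq_mulLM_zbar (mem_H2_of_mul hg (hKH hk) hgk) h0]
  refine mulLM_zbar_mem_mulSet ?_ hgk
  rw [← Sstar_eq_mulLM_zbar (hKH hk) hk0]
  exact hK k hk hk0

lemma mulSet_mulLM_fourier_neg (n : ℤ) (f : L2) (K : Submodule ℂ L2) :
    mulSet (⇑(mulLM (fourier (-n) ·) f)) K = (mulSet (⇑f) K).comap (mulLM (fourier n ·)) := by
  ext u
  rw [Submodule.mem_comap]
  constructor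
  · rintro ⟨k, hk, hu⟩
    refine ⟨k, hk, ?_⟩
    filter_upwards [coeFn_mulLM (memLp_fourier n) u, hu,
      coeFn_mulLM (memLp_fourier (-n)) f] with x h₁ h₂ h₃
    rw [h₁, h₂, h₃, ← mul_assoc, ← mul_assoc, ← fourier_add, add_neg_cancel, fourier_zero,
      one_mul]
  · rintro ⟨k, hk, hu⟩
    refine ⟨k, hk, ?_⟩
    have hu' : u = mulLM (fourier (-n) ·) (mulLM (fourier n ·) u) := by
      rw [mulLM_fourier_mulLM_fourier, neg_add_cancel, mulLM_fourier_zero]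
    rw [hu']
    filter_upwards [coeFn_mulLM (memLp_fourier (-n)) (mulLM (fourier n ·) u), hu,
      coeFn_mulLM (memLp_fourier (-n)) f] with x h₁ h₂ h₃
    rw [h₁, h₂, h₃, mul_assoc]

lemma exists_eq_map_zf_pow {K : Submodule ℂ L2} (hK : NearlySstarInvariant K) (hKH : K ≤ H2)
    {f : L2} (hf : f ∈ H2) (hclosed : IsClosed (mulSet (⇑f) K : Set L2)) (hf0 : cf f 0 = 0) :
    ∃ n : ℕ, 1 ≤ n ∧ ∃ N : Submodule ℂ L2, IsClosed (N : Set L2) ∧ N ≤ H2 ∧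
      NearlySstarInvariant N ∧ mulSet (⇑f) K = N.map (mulLM zf ^ n) := by
  rcases eq_or_ne f 0 with rfl | hne
  · exact ⟨1, le_rfl, ⊥, by simp, bot_le, nearlySstarInvariant_bot,
      by rw [mulSet_coeFn_zero, Submodule.map_bot]⟩
  obtain ⟨n, hn, hlt⟩ := exists_order hf hne
  have hn1 : 1 ≤ n := Nat.one_le_iff_ne_zero.mpr (by rintro rfl; exact hn hf0)
  set g := mulLM (fourier (-(n : ℤ)) ·) f
  have hg : ∀ j, cf g j = cf f (j + n) := fun j => by rw [cf_mulLM_fourier, sub_neg_eq_add]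
  have hgH : g ∈ H2 := mem_coeffGE.mpr fun j hj => by rw [hg]; exact hlt _ (by omega)
  have hg0 : cf g 0 ≠ 0 := by rwa [hg, zero_add]
  refine ⟨n, hn1, mulSet (⇑g) K, ?_, mulSet_le_H2 hgH hKH,
    nearlySstarInvariant_mulSet hK hKH hgH hg0, ?_⟩
  · rw [mulSet_mulLM_fourier_neg]
    exact hclosed.preimage (continuous_mulLM (memLp_fourier n) (norm_fourier_eq_one n))
  · rw [mulLM_zf_pow, mulSet_mulLM_fourier_neg, Submodule.map_comap_eq_of_surjective]
    exact fun u => ⟨mulLM (fourier (-(n : ℤ)) ·) u,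
      by rw [mulLM_fourier_mulLM_fourier, add_neg_cancel, mulLM_fourier_zero]⟩

def reproducingKernelZero (I : Tc → ℂ) : L2 :=
  fourierLp 2 0 - conj (cf (mulLM I (fourierLp 2 0)) 0) • mulLM I (fourierLp 2 0)

/-- The defect space `(f/z)(K ⊖ (K ∩ zH²))`. -/
def defectSpace (f : L2) (K : Submodule ℂ L2) : Submodule ℂ L2 :=
  (mulSet (⇑f) (K ⊓ (K ⊓ coeffGE 1)ᗮ)).comap (mulLM zf)

section ReproducingKernel

variable {I : Tc → ℂ}

lemma inner_reproducingKernelZero {k : L2} (hk : k ∈ Kmod I) :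
    inner ℂ (reproducingKernelZero I) k = cf k 0 := by
  have hIk : inner ℂ (mulLM I (fourierLp 2 0)) k = 0 :=
    Submodule.inner_right_of_mem_orthogonal
      (Submodule.mem_map_of_mem fourierLp_zero_mem_H2) (Submodule.mem_inf.mp hk).2
  rw [reproducingKernelZero, inner_sub_left, inner_smul_left, hIk, mul_zero, sub_zero,
    cf_eq_inner]

lemma coeFn_mulLM_fourierLp_zero (hI : IsInner I) :
    (⇑(mulLM I (fourierLp 2 0)) : Tc → ℂ) =ᵐ[μ0] I := by
  filter_upwards [coeFn_mulLM hI.memLinf (fourierLp 2 0), coeFn_fourierLp 2 0] with x h₁ h₂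
  rw [h₁, h₂, fourier_zero, mul_one]

lemma coeFn_reproducingKernelZero (hI : IsInner I) :
    (⇑(reproducingKernelZero I) : Tc → ℂ) =ᵐ[μ0]
      fun x => 1 - conj (cf (mulLM I (fourierLp 2 0)) 0) * I x := by
  filter_upwards [Lp.coeFn_sub (fourierLp 2 0)
      (conj (cf (mulLM I (fourierLp 2 0)) 0) • mulLM I (fourierLp 2 0)),
    Lp.coeFn_smul (conj (cf (mulLM I (fourierLp 2 0)) 0)) (mulLM I (fourierLp 2 0)),
    coeFn_fourierLp 2 0, coeFn_mulLM_fourierLp_zero hI] with x h₁ h₂ h₃ h₄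
  rw [reproducingKernelZero, h₁, Pi.sub_apply, h₂, Pi.smul_apply, h₃, h₄, fourier_zero,
    smul_eq_mul]

lemma reproducingKernelZero_mem_Kmod (hI : IsInner I) : reproducingKernelZero I ∈ Kmod I := by
  set I₂ := mulLM I (fourierLp 2 0)
  have hI₂ : I₂ ∈ H2 := mem_coeffGE.mpr fun n hn => by
    rw [cf_congr_ae (coeFn_mulLM_fourierLp_zero hI)]
    exact hI.analytic n hn
  refine Submodule.mem_inf.mpr ⟨H2.sub_mem fourierLp_zero_mem_H2 (H2.smul_mem _ hI₂),
    (Submodule.mem_orthogonal _ _).mpr ?_⟩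
  rintro _ ⟨g, hg, rfl⟩
  have hIg : cf (mulLM I g) 0 = cf I₂ 0 * cf g 0 := by
    refine cf_mul_of_le hg (mem_coeffGE.mp hI₂) ?_ le_rfl
    filter_upwards [coeFn_mulLM hI.memLinf g, coeFn_mulLM_fourierLp_zero hI] with x h₁ h₂
    rw [h₁, h₂]
  have hunit := inner_mulLM_mulLM hI.memLinf hI.unimodular g (fourierLp 2 0)
  rw [reproducingKernelZero, inner_sub_right, inner_smul_right, hunit, ← inner_conj_symm,
    ← inner_conj_symm g, ← cf_eq_inner, ← cf_eq_inner, hIg, map_mul, sub_self]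

lemma reproducingKernelZero_mem_inf_orthogonal (hI : IsInner I) :
    reproducingKernelZero I ∈ Kmod I ⊓ (Kmod I ⊓ coeffGE 1)ᗮ := by
  refine Submodule.mem_inf.mpr ⟨reproducingKernelZero_mem_Kmod hI,
    (Submodule.mem_orthogonal' _ _).mpr fun v hv => ?_⟩
  rw [inner_reproducingKernelZero (Submodule.mem_inf.mp hv).1]
  exact mem_coeffGE.mp (Submodule.mem_inf.mp hv).2 0 zero_lt_one

lemma cf_sub_smul_reproducingKernelZero (hI : IsInner I) {k : L2} (hk : k ∈ Kmod I) :
    cf (k - (cf k 0 / cf (reproducingKernelZero I) 0) • reproducingKernelZero I) 0 = 0 := by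
  have hw := inner_reproducingKernelZero (reproducingKernelZero_mem_Kmod hI)
  rcases eq_or_ne (cf (reproducingKernelZero I) 0) 0 with hw0 | hw0
  · -- `cf k₀ 0 = ‖k₀‖²`, so here `k₀ = 0` and every element of `K_I` vanishes at the origin
    have hw_zero : reproducingKernelZero I = 0 := inner_self_eq_zero.mp (hw.trans hw0)
    have hk0 : cf k 0 = 0 := by rw [← inner_reproducingKernelZero hk, hw_zero, inner_zero_left]
    rw [hw_zero, smul_zero, sub_zero, hk0]
  · rw [cf_sub, cf_smul, div_mul_cancel₀ _ hw0, sub_self]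

lemma Sstar_mem_mulSet_sup_defectSpace (hI : IsInner I) {f : L2} (hf : f ∈ H2) {h : L2}
    (hh : h ∈ mulSet (⇑f) (Kmod I)) (h0 : cf h 0 = 0) :
    Sstar h ∈ mulSet (⇑f) (Kmod I) ⊔ defectSpace f (Kmod I) := by
  obtain ⟨k, hk, hfk⟩ := hh
  set w := reproducingKernelZero I
  set s := cf k 0 / cf w 0
  -- the product `f w`, which lies in `L²` because `w = 1 - conj (I 0) • I` is bounded
  set fw := f - conj (cf (mulLM I (fourierLp 2 0)) 0) • mulLM I f
  have hfw : (⇑fw : Tc → ℂ) =ᵐ[μ0] fun x => f x * w x := by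
    filter_upwards [Lp.coeFn_sub f (conj (cf (mulLM I (fourierLp 2 0)) 0) • mulLM I f),
      Lp.coeFn_smul (conj (cf (mulLM I (fourierLp 2 0)) 0)) (mulLM I f),
      coeFn_mulLM hI.memLinf f, coeFn_reproducingKernelZero hI] with x h₁ h₂ h₃ h₄
    rw [h₁, Pi.sub_apply, h₂, Pi.smul_apply, h₃, h₄, smul_eq_mul]
    ring
  have hk' : k - s • w ∈ Kmod I := (Kmod I).sub_mem hk ((Kmod I).smul_mem s
    (reproducingKernelZero_mem_Kmod hI))
  have hfk' : (⇑(h - s • fw) : Tc → ℂ) =ᵐ[μ0] fun x => f x * (k - s • w) x := by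
    filter_upwards [Lp.coeFn_sub h (s • fw), Lp.coeFn_smul s fw, hfk, hfw,
      Lp.coeFn_sub k (s • w), Lp.coeFn_smul s w] with x h₁ h₂ h₃ h₄ h₅ h₆
    rw [h₁, h₅, Pi.sub_apply, Pi.sub_apply, h₂, h₆, Pi.smul_apply, Pi.smul_apply, h₃, h₄,
      smul_eq_mul, smul_eq_mul]
    ring
  have hk'0 := cf_sub_smul_reproducingKernelZero hI hk
  rw [Sstar_eq_mulLM_zbar (mem_H2_of_mul hf (Submodule.mem_inf.mp hk).1 hfk) h0]
  refine Submodule.mem_sup.mpr ⟨mulLM zbar (h - s • fw), ?_, s • mulLM zbar fw, ?_, ?_⟩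
  · refine mulLM_zbar_mem_mulSet ?_ hfk'
    rw [← Sstar_eq_mulLM_zbar (Submodule.mem_inf.mp hk').1 hk'0]
    exact nearlySstarInvariant_Kmod I _ hk' hk'0
  · rw [defectSpace, Submodule.mem_comap, map_smul, mulLM_zf_mulLM_zbar]
    exact Submodule.smul_mem _ s ⟨w, reproducingKernelZero_mem_inf_orthogonal hI, hfw⟩
  · rw [map_sub, map_smul, sub_add_cancel]

end ReproducingKernel

lemma eq_zero_of_cf_zero_of_mem_inf_orthogonal {K : Submodule ℂ L2} (hKH : K ≤ H2) {w : L2}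
    (hw : w ∈ K ⊓ (K ⊓ coeffGE 1)ᗮ) (hw0 : cf w 0 = 0) : w = 0 := by
  obtain ⟨hwK, hwO⟩ := Submodule.mem_inf.mp hw
  have hw1 : w ∈ K ⊓ coeffGE 1 := Submodule.mem_inf.mpr ⟨hwK, mem_coeffGE.mpr fun j hj => by
    rcases (show j ≤ 0 by omega).lt_or_eq with hlt | rfl
    · exact mem_coeffGE.mp (hKH hwK) j hlt
    · exact hw0⟩
  exact inner_self_eq_zero.mp (Submodule.inner_right_of_mem_orthogonal hw1 hwO)

lemma mulLM_zf_injective : Function.Injective (mulLM zf) :=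
  Function.LeftInverse.injective mulLM_zbar_mulLM_zf

lemma finrank_defectSpace_le_one {K : Submodule ℂ L2} (hKH : K ≤ H2) {f : L2} (hf : f ∈ H2) :
    Module.finrank ℂ (defectSpace f K) ≤ 1 := by
  rcases eq_or_ne f 0 with rfl | hne
  · rw [defectSpace, mulSet_coeFn_zero, Submodule.comap_bot,
      LinearMap.ker_eq_bot_of_injective mulLM_zf_injective, finrank_bot]
    exact zero_le_one
  obtain ⟨n, hn, hlt⟩ := exists_order hf hne
  -- if `z e = f w` then the coefficient `n - 1` of `e` is `f̂(n) ŵ(0)`, and `ŵ(0)` determines `w`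
  have hinj : Function.Injective
      ((coeffCLM ((n : ℤ) - 1) : L2 →ₗ[ℂ] ℂ).comp (defectSpace f K).subtype) := by
    refine (injective_iff_map_eq_zero _).mpr ?_
    rintro ⟨e, w, hw, hew⟩ he
    have hcf : cf (mulLM zf e) n = cf f n * cf w 0 :=
      cf_mul_of_le (hKH (Submodule.mem_inf.mp hw).1) hlt hew le_rfl
    rw [show zf = (fourier 1 ·) from rfl, cf_mulLM_fourier] at hcf
    have hw0 : cf w 0 = 0 := (mul_eq_zero.mp (hcf.symm.trans he)).resolve_left hn
    obtain rfl := eq_zero_of_cf_zero_of_mem_inf_orthogonal hKH hw hw0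
    have hze : mulLM zf e = 0 := Lp.ext (by
      filter_upwards [hew, Lp.coeFn_zero ℂ 2 μ0] with x h₁ h₂
      rw [h₁, h₂, Pi.zero_apply, mul_zero])
    exact Subtype.ext (mulLM_zf_injective (hze.trans (map_zero _).symm))
  simpa using LinearMap.finrank_le_finrank_of_injective hinj

theorem multiplier_times_model_space_dichotomy_general
    (f : L2) (hf : f ∈ H2) (I : Tc → ℂ) (hI : IsInner I)
    (hclosed : IsClosed ((mulSet (⇑f) (Kmod I) : Submodule ℂ L2) : Set L2)) :
    (cf f 0 ≠ 0 →
      ∀ h ∈ mulSet (⇑f) (Kmod I), cf h 0 = 0 → Sstar h ∈ mulSet (⇑f) (Kmod I)) ∧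
    (cf f 0 = 0 →
      -- (i) `f·K_I` is a power of `z` times a nearly `S*`-invariant subspace
      (∃ n : ℕ, 1 ≤ n ∧ ∃ N : Submodule ℂ L2,
          IsClosed ((N : Submodule ℂ L2) : Set L2) ∧ N ≤ H2 ∧
          (∀ h ∈ N, cf h 0 = 0 → Sstar h ∈ N) ∧
          mulSet (⇑f) (Kmod I) = N.map ((mulLM zf) ^ n)) ∧
      -- (ii) `f·K_I` is nearly `S*`-invariant with defect space
      --      `(f/z)(K_I ⊖ (K_I ∩ zH²))`
      ((∀ h ∈ mulSet (⇑f) (Kmod I), cf h 0 = 0 →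
          Sstar h ∈ mulSet (⇑f) (Kmod I) ⊔
            (mulSet (⇑f) (Kmod I ⊓ (Kmod I ⊓ coeffGE 1)ᗮ)).comap (mulLM zf)) ∧
        Module.finrank ℂ
          ↥((mulSet (⇑f) (Kmod I ⊓ (Kmod I ⊓ coeffGE 1)ᗮ)).comap (mulLM zf)) ≤ 1)) := by
  have hKH : Kmod I ≤ H2 := inf_le_left
  have hK := nearlySstarInvariant_Kmod I
  exact ⟨fun hf0 => nearlySstarInvariant_mulSet hK hKH hf hf0,
    fun hf0 => ⟨exists_eq_map_zf_pow hK hKH hf hclosed hf0,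
      fun _ hh h0 => Sstar_mem_mulSet_sup_defectSpace hI hf hh h0,
      finrank_defectSpace_le_one hKH hf⟩⟩

/-- **Theorem 4.4.**  Let `f ∈ H²` and let `I` be inner with `f·K_I` a closed subspace of
`H²`.  If `f(0) ≠ 0` then `f·K_I` is nearly `S*`-invariant.  If `f(0) = 0` then `f·K_I` is
both (i) `zⁿ·N` for some `n ≥ 1` and some nearly `S*`-invariant subspace `N ⊆ H²`, and
(ii) nearly `S*`-invariant with the (at most one-dimensional) defect space
`(f/z)·(K_I ⊖ (K_I ∩ zH²))`. -/
theorem multiplier_times_model_space_dichotomy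
    (f : L2) (hf : f ∈ H2) (I : Tc → ℂ) (hI : IsInner I)
    (hclosed : IsClosed ((mulSet (⇑f) (Kmod I) : Submodule ℂ L2) : Set L2))
    (hsub : mulSet (⇑f) (Kmod I) ≤ H2) :
    (cf f 0 ≠ 0 →
      ∀ h ∈ mulSet (⇑f) (Kmod I), cf h 0 = 0 → Sstar h ∈ mulSet (⇑f) (Kmod I)) ∧
    (cf f 0 = 0 →
      -- (i) `f·K_I` is a power of `z` times a nearly `S*`-invariant subspace
      (∃ n : ℕ, 1 ≤ n ∧ ∃ N : Submodule ℂ L2,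
          IsClosed ((N : Submodule ℂ L2) : Set L2) ∧ N ≤ H2 ∧
          (∀ h ∈ N, cf h 0 = 0 → Sstar h ∈ N) ∧
          mulSet (⇑f) (Kmod I) = N.map ((mulLM zf) ^ n)) ∧
      -- (ii) `f·K_I` is nearly `S*`-invariant with defect space
      --      `(f/z)(K_I ⊖ (K_I ∩ zH²))`
      ((∀ h ∈ mulSet (⇑f) (Kmod I), cf h 0 = 0 →
          Sstar h ∈ mulSet (⇑f) (Kmod I) ⊔
            (mulSet (⇑f) (Kmod I ⊓ (Kmod I ⊓ coeffGE 1)ᗮ)).comap (mulLM zf)) ∧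
        Module.finrank ℂ
          ↥((mulSet (⇑f) (Kmod I ⊓ (Kmod I ⊓ coeffGE 1)ᗮ)).comap (mulLM zf)) ≤ 1)) :=
  multiplier_times_model_space_dichotomy_general f hf I hI hclosed

end Paper
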